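/- Let K be a field and let q ∈ K be nonzero. For every integer k ≥ 0, T_k(−q^{−1}, q) = Σ_{i=−k}^{k} (−1)^{k−i} · q^{k^2 − i^2}. -/

import Mathlib

/-- The polynomials `T_k(t,q)` defined by `T_0 = 1` and, for `k ≥ 1`,
`T_k = T_{k-1} + (1+t)(-q)^{k²} + (1-t²) ∑_{i=1}^{k-1} (-q)^{k²-i²} T_{i-1}`
(below the sum is reindexed by `i ↦ i+1`). -/
def T {R : Type*} [CommRing R] (t q : R) : ℕ → R
  | 0 => 1
  | (k+1) => T t q k + (1 + t) * (-q) ^ ((k+1)^2) +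
      (1 - t^2) * ∑ i ∈ (Finset.range k).attach,
        (-q) ^ ((k+1)^2 - (i.1+1)^2) * T t q i.1
decreasing_by
  · exact Nat.lt_succ_self k
  · exact Nat.lt_succ_of_lt (Finset.mem_range.mp i.2)

/-- `f n h` with `f 0 0 = 1`, `f 0 h = 0` for `h ≥ 1`, `f n h = 0` for `h < 0`, and
`f n h = (1-q^h) f (n-1) (h-1) + (1-t q^{h+1}) f (n-1) (h+1)`; at `h = 0` the first
term vanishes since `1 - q^0 = 0`. -/
def f {R : Type*} [CommRing R] (t q : R) : ℕ → ℕ → R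
  | 0, h => if h = 0 then 1 else 0
  | (n+1), 0 => (1 - t * q) * f t q n 1
  | (n+1), (h+1) => (1 - q^(h+1)) * f t q n h + (1 - t * q^(h+2)) * f t q n (h+2)

/-- `Ẽ_n(t,q) = f(2n,0)`, which is `(1-q)^{2n}` times the `(t,q)`-Euler number. -/
def Etilde {R : Type*} [CommRing R] (t q : R) (n : ℕ) : R := f t q (2*n) 0

/-- Binomial coefficient with integer lower index, `0` when the lower index is negative. -/
def binom (n : ℕ) (m : ℤ) : ℤ := if 0 ≤ m then (n.choose m.toNat : ℤ) else 0

/-- q-Pochhammer symbol `(a;q)_n = ∏_{j=0}^{n-1} (1 - a q^j)`. -/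
def qPoch {K : Type*} [CommRing K] (a q : K) (n : ℕ) : K :=
  ∏ j ∈ Finset.range n, (1 - a * q ^ j)

/-- Gaussian binomial coefficient `[n choose k]_q = (q;q)_n / ((q;q)_k (q;q)_{n-k})`,
equal to `0` whenever `k < 0` or `k > n`. -/
def gauss {K : Type*} [Field K] (q : K) (n k : ℤ) : K :=
  if 0 ≤ k ∧ k ≤ n then
    qPoch q q n.toNat / (qPoch q q k.toNat * qPoch q q (n - k).toNat)
  else 0

/-- Number of distinct (positive) part sizes of the partition encoded by an
antitone function `Fin m → Fin (n+1)`. -/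
def distCard {m n : ℕ} (g : Fin m → Fin (n+1)) : ℕ :=
  ((Finset.univ.image fun i => ((g i : ℕ))).erase 0).card

/-- `∑_{λ ⊆ B(m,n)} x^{dist(λ)} q^{|λ|}`: partitions in the `m × n` box are encoded
as antitone functions `Fin m → Fin (n+1)`. -/
def boxSum {R : Type*} [CommRing R] (x q : R) (m n : ℕ) : R :=
  ∑ g ∈ Finset.univ.filter (fun g : Fin m → Fin (n+1) => ∀ i j : Fin m, i ≤ j → g j ≤ g i),
    x ^ distCard g * q ^ (∑ i, (g i : ℕ))

/-! Both sides satisfy the second-order recurrence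
`a (k+2) = a (k+1) + (-q)^(2k+3) (a (k+1) - t² a k)` with `t = -q⁻¹` and agree for `k = 0, 1`.
For `T` this comes from subtracting `(-q)^(2k+3)` times the defining recurrence at `k+1` from the
one at `k+2`, which cancels the whole inner sum except its last term. For the right-hand side
`S k` it follows from `S (k+1) = 2 - q^(2k+1) S k`: the two outer summands `i = ±(k+1)` contribute `2`
and every inner summand gets multiplied by `-q^(2k+1)`. -/

section Recurrence

variable {R : Type*} [CommRing R] (t q : R)

theorem T_succ (k : ℕ) :
    T t q (k + 1) = T t q k + (1 + t) * (-q) ^ ((k + 1) ^ 2) +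
      (1 - t ^ 2) * ∑ i ∈ Finset.range k, (-q) ^ ((k + 1) ^ 2 - (i + 1) ^ 2) * T t q i := by
  rw [T, Finset.sum_attach (Finset.range k) fun i => (-q) ^ ((k + 1) ^ 2 - (i + 1) ^ 2) * T t q i]

theorem T_one : T t q 1 = 1 + (1 + t) * (-q) := by
  simp [T_succ, T]

theorem T_add_two (k : ℕ) :
    T t q (k + 2) = T t q (k + 1) + (-q) ^ (2 * k + 3) * (T t q (k + 1) - t ^ 2 * T t q k) := by
  have hsq : ∀ i ≤ k, (k + 2) ^ 2 - (i + 1) ^ 2 = 2 * k + 3 + ((k + 1) ^ 2 - (i + 1) ^ 2) := by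
    intro i hi
    have h1 : (i + 1) ^ 2 ≤ (k + 1) ^ 2 := Nat.pow_le_pow_left (by omega) 2
    have h2 : (i + 1) ^ 2 ≤ (k + 2) ^ 2 := Nat.pow_le_pow_left (by omega) 2
    zify [h1, h2]
    ring
  have hsum : ∑ i ∈ Finset.range (k + 1), (-q) ^ ((k + 2) ^ 2 - (i + 1) ^ 2) * T t q i =
      (-q) ^ (2 * k + 3) * (∑ i ∈ Finset.range k, (-q) ^ ((k + 1) ^ 2 - (i + 1) ^ 2) * T t q i
        + T t q k) := by
    rw [Finset.sum_range_succ, mul_add, Finset.mul_sum, hsq k le_rfl, Nat.sub_self, add_zero]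
    congr 1
    refine Finset.sum_congr rfl fun i hi => ?_
    rw [hsq i (Finset.mem_range.mp hi).le, pow_add, mul_assoc]
  have hpow : (-q) ^ ((k + 2) ^ 2) = (-q) ^ (2 * k + 3) * (-q) ^ ((k + 1) ^ 2) := by
    rw [← pow_add]; ring_nf
  rw [T_succ t q (k + 1), hsum, hpow, T_succ t q k]
  ring

end Recurrence

theorem eq_of_two_step_recurrence {α : Type*} {a b : ℕ → α} (F : ℕ → α → α → α)
    (ha : ∀ k, a (k + 2) = F k (a (k + 1)) (a k)) (hb : ∀ k, b (k + 2) = F k (b (k + 1)) (b k))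
    (h0 : a 0 = b 0) (h1 : a 1 = b 1) : a = b := by
  funext k
  induction k using Nat.twoStepInduction with
  | zero => exact h0
  | one => exact h1
  | more k hk hk1 => rw [ha, hb, hk, hk1]

noncomputable def thetaPartialSum {K : Type*} [Field K] (q : K) (k : ℕ) : K :=
  ∑ i ∈ Finset.Icc (-(k : ℤ)) k, (-1 : K) ^ ((k : ℤ) - i) * q ^ ((k : ℤ) ^ 2 - i ^ 2)

section ThetaPartialSum

variable {K : Type*} [Field K] {q : K}

theorem thetaPartialSum_zero : thetaPartialSum q 0 = 1 := by
  simp [thetaPartialSum]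

theorem thetaPartialSum_succ (hq : q ≠ 0) (k : ℕ) :
    thetaPartialSum q (k + 1) = 2 - q ^ (2 * k + 1) * thetaPartialSum q k := by
  have hIcc : Finset.Icc (-((k + 1 : ℕ) : ℤ)) ((k + 1 : ℕ) : ℤ) =
      insert (-(k + 1 : ℤ)) (insert (k + 1 : ℤ) (Finset.Icc (-(k : ℤ)) k)) := by
    ext x; simp; omega
  have hinner : ∀ i : ℤ,
      (-1 : K) ^ (((k + 1 : ℕ) : ℤ) - i) * q ^ (((k + 1 : ℕ) : ℤ) ^ 2 - i ^ 2) =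
        -q ^ (2 * k + 1) * ((-1 : K) ^ ((k : ℤ) - i) * q ^ ((k : ℤ) ^ 2 - i ^ 2)) := by
    intro i
    have e1 : ((k + 1 : ℕ) : ℤ) - i = 1 + ((k : ℤ) - i) := by push_cast; ring
    have e2 : ((k + 1 : ℕ) : ℤ) ^ 2 - i ^ 2 = ((2 * k + 1 : ℕ) : ℤ) + ((k : ℤ) ^ 2 - i ^ 2) := by
      push_cast; ring
    rw [e1, e2, zpow_add₀ (neg_ne_zero.mpr one_ne_zero), zpow_add₀ hq, zpow_one, zpow_natCast]
    ring
  have hend : ∀ i : ℤ, i = -(k + 1) ∨ i = k + 1 →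
      (-1 : K) ^ (((k + 1 : ℕ) : ℤ) - i) * q ^ (((k + 1 : ℕ) : ℤ) ^ 2 - i ^ 2) = 1 := by
    rintro i (rfl | rfl)
    · rw [show ((k + 1 : ℕ) : ℤ) - -(k + 1) = 2 * (k + 1) by push_cast; ring,
        show ((k + 1 : ℕ) : ℤ) ^ 2 - (-(k + 1 : ℤ)) ^ 2 = 0 by push_cast; ring,
        zpow_mul, zpow_ofNat, neg_one_sq, one_zpow, zpow_zero, one_mul]
    · simp
  rw [thetaPartialSum, hIcc, Finset.sum_insert (by simp; omega), Finset.sum_insert (by simp),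
    hend _ (.inl rfl), hend _ (.inr rfl), Finset.sum_congr rfl fun i _ => hinner i,
    ← Finset.mul_sum, ← thetaPartialSum]
  ring

theorem thetaPartialSum_add_two (hq : q ≠ 0) (k : ℕ) :
    thetaPartialSum q (k + 2) = thetaPartialSum q (k + 1) +
      (-q) ^ (2 * k + 3) * (thetaPartialSum q (k + 1) - (-q⁻¹) ^ 2 * thetaPartialSum q k) := by
  have hS1 := thetaPartialSum_succ hq k
  rw [thetaPartialSum_succ hq (k + 1), hS1, Odd.neg_pow ⟨k + 1, by ring⟩]
  field_simp
  ring

end ThetaPartialSum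

theorem stmt_12 {K : Type*} [Field K] (q : K) (hq : q ≠ 0) (k : ℕ) :
    T (-q⁻¹) q k =
      ∑ i ∈ Finset.Icc (-(k:ℤ)) (k:ℤ), (-1 : K) ^ ((k:ℤ) - i) * q ^ ((k:ℤ)^2 - i^2) := by
  have hT1 : T (-q⁻¹) q 1 = thetaPartialSum q 1 := by
    rw [T_one, thetaPartialSum_succ hq, thetaPartialSum_zero]
    field_simp
    ring
  have hT : T (-q⁻¹) q = thetaPartialSum q :=
    eq_of_two_step_recurrence (fun k a₁ a₀ => a₁ + (-q) ^ (2 * k + 3) * (a₁ - (-q⁻¹) ^ 2 * a₀))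
      (T_add_two _ q) (thetaPartialSum_add_two hq) (by rw [T, thetaPartialSum_zero]) hT1
  exact congrFun hT k
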